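/- arXiv:1704.00531 — 2 statements merged into one kernel-verified Lean document; each statement's English description precedes it below -/
import Mathlib

section
/- Let (X,d) be an unbounded metric space and p ∈ X. All pretangent spaces to X at infinity (over all scaling sequences r̃) are bounded if and only if the set S_p(X) is ω-strongly porous at infinity. -/
open Filter Topology

/-- A scaling sequence: a sequence of positive reals tending to infinity. -/
def ScalingSeq (r : ℕ → ℝ) : Prop :=
  (∀ n, 0 < r n) ∧ Tendsto r atTop atTop

/-- `x ∈ X̃_{∞,r̃}`: the sequence `x` satisfies `d(x_n,p) → ∞` and the finite limit
`d̃_r̃(x̃) = lim d(x_n,p)/r_n` exists.  Here `d` is the distance function of the space. -/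
def SeqAdm {Y : Type*} (d : Y → Y → ℝ) (p : Y) (r : ℕ → ℝ) (x : ℕ → Y) : Prop :=
  Tendsto (fun n => d (x n) p) atTop atTop ∧
  ∃ L : ℝ, Tendsto (fun n => d (x n) p / r n) atTop (𝓝 L)

/-- The equivalence `x̃ ≡ ỹ ⇔ lim d(x_n,y_n)/r_n = 0`. -/
def SeqEquiv {Y : Type*} (d : Y → Y → ℝ) (r : ℕ → ℝ) (x y : ℕ → Y) : Prop :=
  Tendsto (fun n => d (x n) (y n) / r n) atTop (𝓝 0)

/-- Mutual stability: the limit `lim d(x_n,y_n)/r_n` exists (and is finite). -/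
def MutStable {Y : Type*} (d : Y → Y → ℝ) (r : ℕ → ℝ) (x y : ℕ → Y) : Prop :=
  ∃ L : ℝ, Tendsto (fun n => d (x n) (y n) / r n) atTop (𝓝 L)

/-- A set of sequences representing a clique in the graph `G_{X,r̃}`: all members are
admissible, the set is a union of equivalence classes, and all members are pairwise
mutually stable. -/
def IsCliqueSet {Y : Type*} (d : Y → Y → ℝ) (p : Y) (r : ℕ → ℝ) (C : Set (ℕ → Y)) : Prop :=
  (∀ x ∈ C, SeqAdm d p r x) ∧
  (∀ x ∈ C, ∀ y, SeqAdm d p r y → SeqEquiv d r x y → y ∈ C) ∧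
  (∀ x ∈ C, ∀ y ∈ C, MutStable d r x y)

/-- A pretangent space `Ω^X_{∞,r̃}`, encoded as the (union of the) maximal clique of the
graph `G_{X,r̃}`. -/
def IsPretangent {Y : Type*} (d : Y → Y → ℝ) (p : Y) (r : ℕ → ℝ) (C : Set (ℕ → Y)) : Prop :=
  IsCliqueSet d p r C ∧ ∀ D, IsCliqueSet d p r D → C ⊆ D → D = C

/-- The point `α₀ = α₀(X,r̃)`: the class of admissible sequences with `d̃_r̃(x̃) = 0`. -/
def alphaZero {Y : Type*} (d : Y → Y → ℝ) (p : Y) (r : ℕ → ℝ) : Set (ℕ → Y) :=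
  {x | SeqAdm d p r x ∧ Tendsto (fun n => d (x n) p / r n) atTop (𝓝 0)}

/-- The metric `ρ` of a pretangent space: `ρ(α,β) = lim d(x_n,y_n)/r_n`. -/
noncomputable def seqDist {Y : Type*} (d : Y → Y → ℝ) (r : ℕ → ℝ) (x y : ℕ → Y) : ℝ :=
  limUnder atTop (fun n => d (x n) (y n) / r n)

/-- A sequence of reals is eventually increasing if `τ_{n+1} ≥ τ_n` for all
sufficiently large `n`. -/
def EventuallyIncr (τ : ℕ → ℝ) : Prop :=
  ∃ N : ℕ, ∀ n ≥ N, τ n ≤ τ (n + 1)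

/-- `τ̃ ∈ Ẽ^i_∞`: an eventually increasing sequence in `E` tending to infinity. -/
def MemEInfty (E : Set ℝ) (τ : ℕ → ℝ) : Prop :=
  (∀ n, τ n ∈ E) ∧ EventuallyIncr τ ∧ Tendsto τ atTop atTop

/-- `(a,b)` is a connected component of `Int(ℝ⁺ \ E)`. -/
def IsGapComponent (E : Set ℝ) (a b : ℝ) : Prop :=
  a < b ∧ Set.Ioo a b ⊆ interior (Set.Ici (0:ℝ) \ E) ∧
  a ∉ interior (Set.Ici (0:ℝ) \ E) ∧ b ∉ interior (Set.Ici (0:ℝ) \ E)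

/-- `((aₙ,bₙ)) ∈ Ĩ^i_E`: every `(aₙ,bₙ)` is a connected component of `Int(ℝ⁺ \ E)`,
`(aₙ)` is eventually increasing, `aₙ → ∞` and `(bₙ-aₙ)/bₙ → 1`. -/
def MemIEi (E : Set ℝ) (a b : ℕ → ℝ) : Prop :=
  (∀ n, IsGapComponent E (a n) (b n)) ∧ EventuallyIncr a ∧
  Tendsto a atTop atTop ∧ Tendsto (fun n => (b n - a n) / b n) atTop (𝓝 1)

/-- `ã ≍ γ̃`: there are constants `c₁, c₂ > 0` with `c₁ aₙ < γₙ < c₂ aₙ` for all `n`. -/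
def BiComparable (a γ : ℕ → ℝ) : Prop :=
  ∃ c₁ c₂ : ℝ, 0 < c₁ ∧ 0 < c₂ ∧ ∀ n, c₁ * a n < γ n ∧ γ n < c₂ * a n

/-- `E` is `τ̃`-strongly porous at infinity if there is `((aₙ,bₙ)) ∈ Ĩ^i_E` with
`τ̃ ≍ ã`. -/
def TauStronglyPorousAtInfty (E : Set ℝ) (τ : ℕ → ℝ) : Prop :=
  ∃ a b : ℕ → ℝ, MemIEi E a b ∧ BiComparable τ a

/-- `E` is completely strongly porous at infinity if it is `τ̃`-strongly porous at
infinity for every `τ̃ ∈ Ẽ^i_∞`. -/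
def CompletelyStronglyPorousAtInfty (E : Set ℝ) : Prop :=
  ∀ τ : ℕ → ℝ, MemEInfty E τ → TauStronglyPorousAtInfty E τ

/-- `E` is `ω`-strongly porous at infinity if every `τ̃ ∈ Ẽ^i_∞` has a subsequence
`τ̃'` for which `E` is `τ̃'`-strongly porous at infinity. -/
def OmegaStronglyPorousAtInfty (E : Set ℝ) : Prop :=
  ∀ τ : ℕ → ℝ, MemEInfty E τ →
    ∃ φ : ℕ → ℕ, StrictMono φ ∧ TauStronglyPorousAtInfty E (τ ∘ φ)

/-!
If `S = S_p(X)` has no strongly porous subsequence along some `τ̃ ∈ S̃^i_∞`, then for every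
`c ≥ 1` there is `C` such that `S` meets `[c τₙ, C τₙ]` for all large `n` (otherwise the empty
windows `[c τₙ, C τₙ]`, `C → ∞`, sit inside gaps of `S` that are comparable to `τₙ` and whose
relative length tends to `1`). Points `ξₖ(n)` with `d(ξₖ(n), p) / τₙ ∈ [k + 1, Cₖ]` and a
diagonal subsequence `r̃` of `τ̃` along which all the rescaled mutual distances converge give a
set of pairwise mutually stable sequences with `ρ(ξ₀, ξₖ) ≥ k + 1 - C₀`; by Zorn it lies in an
unbounded pretangent space.

Conversely, an unbounded pretangent space contains `w̃` with `d̃(w̃) > 0` and `z̃` with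
`d̃(z̃) / d̃(w̃)` as large as we like. Strong porosity of `S` along a subsequence of
`τₙ = d(wₙ, p)` makes `S` miss the ratios `(c₂, K)` for every `K` eventually, which
`d(zₙ, p) / τₙ → d̃(z̃) / d̃(w̃) > c₂` contradicts.
-/

lemma tendsto_sub_div_self_nhds_one_iff {a b : ℕ → ℝ} (hb : ∀ᶠ n in atTop, b n ≠ 0) :
    Tendsto (fun n => (b n - a n) / b n) atTop (𝓝 1) ↔
      Tendsto (fun n => a n / b n) atTop (𝓝 0) := by
  have heq : (fun n => 1 - a n / b n) =ᶠ[atTop] fun n => (b n - a n) / b n := by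
    filter_upwards [hb] with n hn
    rw [sub_div, div_self hn]
  rw [← tendsto_congr' heq]
  constructor <;> intro h <;> simpa using (tendsto_const_nhds (x := (1 : ℝ))).sub h

lemma exists_subseq_forall_tendsto {ι : Type*} [Countable ι] (g : ι → ℕ → ℝ)
    (hg : ∀ i, ∃ B, ∀ᶠ n in atTop, |g i n| ≤ B) :
    ∃ φ : ℕ → ℕ, StrictMono φ ∧ ∀ i, ∃ L, Tendsto (fun n => g i (φ n)) atTop (𝓝 L) := by
  choose B hB using hg
  have hB0 : ∀ i, 0 ≤ B i := fun i =>
    let ⟨_, hn⟩ := (hB i).exists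
    (abs_nonneg _).trans hn
  -- Clamped to `[-B i, B i]`, the family lies in a compact box of the first countable `ι → ℝ`,
  -- and the clamping changes each `g i` only finitely often.
  let h : ι → ℕ → ℝ := fun i n => max (-B i) (min (B i) (g i n))
  have hbox : ∀ n, (fun i => h i n) ∈ Set.univ.pi fun i => Set.Icc (-B i) (B i) :=
    fun n i _ => ⟨le_max_left _ _, max_le (by linarith [hB0 i]) (min_le_left _ _)⟩
  obtain ⟨L, -, φ, hφ, hlim⟩ := (isCompact_univ_pi fun i => isCompact_Icc).tendsto_subseq hbox
  refine ⟨φ, hφ, fun i => ⟨L i, (tendsto_pi_nhds.1 hlim i).congr' ?_⟩⟩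
  filter_upwards [hφ.tendsto_atTop.eventually (hB i)] with n hn
  obtain ⟨h₁, h₂⟩ := abs_le.1 hn
  simp [h, min_eq_right h₂, max_eq_right h₁]

section Porosity

variable {E : Set ℝ}

lemma IsGapComponent.disjoint {a b : ℝ} (h : IsGapComponent E a b) :
    Disjoint (Set.Ioo a b) E :=
  Set.disjoint_left.2 fun _ ht => (interior_subset (h.2.1 ht)).2

lemma exists_isGapComponent {t u v e : ℝ} (ht : t ∈ E) (he : e ∈ E) (ht0 : 0 ≤ t)
    (htu : t ≤ u) (huv : u < v) (hve : v ≤ e) (hgap : Disjoint (Set.Ioo u v) E) :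
    ∃ a b, IsGapComponent E a b ∧ t ≤ a ∧ a ≤ u ∧ v ≤ b := by
  set U := interior (Set.Ici (0 : ℝ) \ E)
  have hEU : ∀ x ∈ E, x ∉ U := fun x hx hxU => (interior_subset hxU).2 hx
  have huvU : Set.Ioo u v ⊆ U := interior_maximal
    (fun x hx => ⟨ht0.trans (htu.trans hx.1.le), Set.disjoint_left.1 hgap hx⟩) isOpen_Ioo
  -- The gap runs from the last point of `Uᶜ` in `[0, u]` to the first one in `[v, ∞)`.
  set A := Set.Icc 0 u ∩ Uᶜ
  set B := Set.Ici v ∩ Uᶜ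
  have hA : IsCompact A := isCompact_Icc.inter_right isOpen_interior.isClosed_compl
  have hB : BddBelow B := ⟨v, fun x hx => hx.1⟩
  have htA : t ∈ A := ⟨⟨ht0, htu⟩, hEU t ht⟩
  have haA : sSup A ∈ A := hA.sSup_mem ⟨t, htA⟩
  have hbB : sInf B ∈ B :=
    (isClosed_Ici.inter isOpen_interior.isClosed_compl).csInf_mem ⟨e, hve, hEU e he⟩ hB
  refine ⟨sSup A, sInf B, ⟨haA.1.2.trans_lt (huv.trans_le hbB.1), ?_, haA.2, hbB.2⟩,
    le_csSup hA.bddAbove htA, haA.1.2, hbB.1⟩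
  rintro x ⟨hax, hxb⟩
  by_contra hxU
  rcases le_or_gt x u with hxu | hux
  · exact (le_csSup hA.bddAbove ⟨⟨haA.1.1.trans hax.le, hxu⟩, hxU⟩).not_gt hax
  rcases lt_or_ge x v with hxv | hvx
  · exact hxU (huvU ⟨hux, hxv⟩)
  · exact (csInf_le hB ⟨hvx, hxU⟩).not_gt hxb

lemma TauStronglyPorousAtInfty.exists_eventually_disjoint {τ : ℕ → ℝ}
    (h : TauStronglyPorousAtInfty E τ) :
    ∃ c, ∀ K, ∀ᶠ n in atTop, Disjoint (Set.Ioo (c * τ n) (K * τ n)) E := by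
  obtain ⟨a, b, ⟨hgap, -, ha, hab⟩, c₁, c₂, hc₁, hc₂, hτa⟩ := h
  refine ⟨c₂, fun K => ?_⟩
  have ha0 : ∀ᶠ n in atTop, 0 < a n := ha.eventually_gt_atTop 0
  have hab0 : Tendsto (fun n => a n / b n) atTop (𝓝 0) :=
    (tendsto_sub_div_self_nhds_one_iff (ha0.mono fun n hn => (hn.trans (hgap n).1).ne')).1 hab
  set K' := max K 1
  have hK' : 0 < K' := lt_max_of_lt_right one_pos
  filter_upwards [ha0, hab0.eventually_lt_const (div_pos hc₁ hK')] with n han habn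
  obtain ⟨hτa₁, hτa₂⟩ := hτa n
  have hbn : 0 < b n := han.trans (hgap n).1
  have hτn : 0 < τ n := pos_of_mul_pos_right (han.trans hτa₂) hc₂.le
  rw [div_lt_div_iff₀ hbn hK'] at habn
  have hKb : K * τ n ≤ b n := by
    have : c₁ * (K' * τ n) < c₁ * b n := by nlinarith
    calc K * τ n ≤ K' * τ n := by gcongr; exact le_max_left _ _
      _ ≤ b n := (lt_of_mul_lt_mul_left this hc₁.le).le
  exact (hgap n).disjoint.mono_left (Set.Ioo_subset_Ioo hτa₂.le hKb)

lemma exists_strictMono_tauStronglyPorous_of_gaps {τ a b : ℕ → ℝ}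
    (hgap : ∀ n, IsGapComponent E (a n) (b n)) (ha : Tendsto a atTop atTop)
    (hab : Tendsto (fun n => a n / b n) atTop (𝓝 0)) (hτa : BiComparable τ a) :
    ∃ θ : ℕ → ℕ, StrictMono θ ∧ TauStronglyPorousAtInfty E (τ ∘ θ) := by
  obtain ⟨θ, hθ, haθ⟩ := strictMono_subseq_of_tendsto_atTop ha
  have hb : ∀ᶠ n in atTop, b (θ n) ≠ 0 :=
    (hθ.tendsto_atTop.eventually (ha.eventually_gt_atTop 0)).mono fun n hn =>
      (hn.trans (hgap _).1).ne'
  obtain ⟨c₁, c₂, hc₁, hc₂, hτa⟩ := hτa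
  exact ⟨θ, hθ, a ∘ θ, b ∘ θ,
    ⟨fun n => hgap (θ n), ⟨0, fun n _ => (haθ n.lt_succ_self).le⟩, ha.comp hθ.tendsto_atTop,
      (tendsto_sub_div_self_nhds_one_iff hb).2 (hab.comp hθ.tendsto_atTop)⟩,
    c₁, c₂, hc₁, hc₂, fun n => hτa (θ n)⟩

lemma exists_strictMono_tauStronglyPorous_of_frequently_disjoint {τ : ℕ → ℝ}
    (hE : ¬ BddAbove E) (hτE : ∀ n, τ n ∈ E) (hτ : Tendsto τ atTop atTop) {c : ℝ} (hc : 1 ≤ c)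
    (h : ∀ C, ∃ᶠ n in atTop, Disjoint (Set.Icc (c * τ n) (C * τ n)) E) :
    ∃ φ : ℕ → ℕ, StrictMono φ ∧ TauStronglyPorousAtInfty E (τ ∘ φ) := by
  obtain ⟨ν, hν, hνgap⟩ := extraction_forall_of_frequently fun j : ℕ =>
    (h (c + j + 1)).and_eventually (hτ.eventually_ge_atTop 1)
  have hgaps : ∀ j : ℕ, ∃ a b, IsGapComponent E a b ∧ τ (ν j) ≤ a ∧ a ≤ c * τ (ν j) ∧
      (c + j + 1) * τ (ν j) ≤ b := by
    intro j
    obtain ⟨hdisj, hτj⟩ := hνgap j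
    obtain ⟨e, he, hve⟩ := not_bddAbove_iff.1 hE ((c + j + 1) * τ (ν j))
    exact exists_isGapComponent (hτE _) he (by linarith) (le_mul_of_one_le_left (by linarith) hc)
      (by nlinarith [j.cast_nonneg (α := ℝ)]) hve.le (hdisj.mono_left Set.Ioo_subset_Icc_self)
  choose a b hgap hτa hac hbc using hgaps
  have hτ1 : ∀ j, 1 ≤ τ (ν j) := fun j => (hνgap j).2
  have hb0 : ∀ j, 0 < b j := fun j => (zero_lt_one.trans_le ((hτ1 j).trans (hτa j))).trans (hgap j).1
  have hab : Tendsto (fun j => a j / b j) atTop (𝓝 0) := by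
    have hlim : Tendsto (fun j : ℕ => c / (c + j + 1)) atTop (𝓝 0) :=
      tendsto_const_nhds.div_atTop (tendsto_atTop_add_const_right _ _
        (tendsto_atTop_add_const_left _ _ tendsto_natCast_atTop_atTop))
    refine squeeze_zero (fun j => div_nonneg (by linarith [hτ1 j, hτa j]) (hb0 j).le)
      (fun j => ?_) hlim
    calc a j / b j ≤ c * τ (ν j) / ((c + j + 1) * τ (ν j)) :=
          div_le_div₀ (by nlinarith [hτ1 j]) (hac j) (by nlinarith [hτ1 j]) (hbc j)
      _ = c / (c + j + 1) := mul_div_mul_right _ _ (by linarith [hτ1 j])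
  obtain ⟨θ, hθ, hpor⟩ := exists_strictMono_tauStronglyPorous_of_gaps (τ := fun j => τ (ν j)) hgap
    (tendsto_atTop_mono hτa (hτ.comp hν.tendsto_atTop)) hab
    ⟨1 / 2, c + 1, by norm_num, by linarith, fun j =>
      ⟨by linarith [hτ1 j, hτa j], by linarith [hτ1 j, hac j]⟩⟩
  exact ⟨ν ∘ θ, hν.comp hθ, hpor⟩

end Porosity

/-- A clique of `G_{X,r̃}` that need not be a union of equivalence classes. -/
def IsMutStableSet {Y : Type*} (d : Y → Y → ℝ) (p : Y) (r : ℕ → ℝ) (D : Set (ℕ → Y)) : Prop :=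
  (∀ x ∈ D, SeqAdm d p r x) ∧ ∀ x ∈ D, ∀ y ∈ D, MutStable d r x y

section Pretangent

variable {Y : Type*} [MetricSpace Y] {p : Y} {r : ℕ → ℝ}

lemma IsCliqueSet.isMutStableSet {C : Set (ℕ → Y)} (h : IsCliqueSet dist p r C) :
    IsMutStableSet dist p r C :=
  ⟨h.1, h.2.2⟩

lemma mutStable_self (x : ℕ → Y) : MutStable dist r x x :=
  ⟨0, by simp⟩

lemma MutStable.symm {x y : ℕ → Y} (h : MutStable dist r x y) : MutStable dist r y x :=
  let ⟨L, hL⟩ := h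
  ⟨L, by simpa only [dist_comm] using hL⟩

lemma MutStable.of_seqEquiv_left {x x' y : ℕ → Y} (hxx' : SeqEquiv dist r x x')
    (h : MutStable dist r x y) : MutStable dist r x' y := by
  obtain ⟨L, hL⟩ := h
  have hdiff : Tendsto (fun n => dist (x' n) (y n) / r n - dist (x n) (y n) / r n)
      atTop (𝓝 0) := by
    refine squeeze_zero_norm (fun n => ?_) (by simpa using hxx'.abs)
    rw [Real.norm_eq_abs, ← sub_div, abs_div, abs_div, abs_of_nonneg dist_nonneg]
    gcongr
    exact (abs_dist_sub_le _ _ _).trans_eq (dist_comm _ _)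
  exact ⟨L, by simpa using hL.add hdiff⟩

lemma IsMutStableSet.exists_isPretangent_superset {S : Set (ℕ → Y)}
    (hS : IsMutStableSet dist p r S) : ∃ C, IsPretangent dist p r C ∧ S ⊆ C := by
  have hchain : ∀ c ⊆ {D | IsMutStableSet dist p r D}, IsChain (· ⊆ ·) c → c.Nonempty →
      ∃ ub ∈ {D | IsMutStableSet dist p r D}, ∀ D ∈ c, D ⊆ ub := by
    refine fun c hc hchain _ => ⟨⋃₀ c, ⟨?_, ?_⟩, fun D hD => Set.subset_sUnion_of_mem hD⟩
    · rintro x ⟨D, hD, hx⟩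
      exact (hc hD).1 x hx
    · rintro x ⟨D₁, hD₁, hx⟩ y ⟨D₂, hD₂, hy⟩
      rcases hchain.total hD₁ hD₂ with h | h
      · exact (hc hD₂).2 x (h hx) y hy
      · exact (hc hD₁).2 x hx y (h hy)
  obtain ⟨C, hSC, hmax⟩ := zorn_subset_nonempty _ hchain S hS
  have hsat : ∀ x ∈ C, ∀ y, SeqAdm dist p r y → SeqEquiv dist r x y → y ∈ C := by
    intro x hx y hy hxy
    have hyC : ∀ z ∈ C, MutStable dist r y z := fun z hz =>
      (hmax.prop.2 x hx z hz).of_seqEquiv_left hxy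
    have hins : IsMutStableSet dist p r (insert y C) := by
      refine ⟨Set.forall_mem_insert.2 ⟨hy, hmax.prop.1⟩, ?_⟩
      rintro a (rfl | ha) b (rfl | hb)
      · exact mutStable_self _
      · exact hyC b hb
      · exact (hyC a ha).symm
      · exact hmax.prop.2 a ha b hb
    exact (hmax.eq_of_subset hins (Set.subset_insert _ _)).symm ▸ Set.mem_insert y C
  exact ⟨C, ⟨⟨hmax.prop.1, hsat, hmax.prop.2⟩,
    fun D hD hCD => (hmax.eq_of_subset hD.isMutStableSet hCD).symm⟩, hSC⟩

lemma seqDist_le_add (hr : ∀ n, 0 ≤ r n) {x y : ℕ → Y} {a b : ℝ}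
    (hx : Tendsto (fun n => dist (x n) p / r n) atTop (𝓝 a))
    (hy : Tendsto (fun n => dist (y n) p / r n) atTop (𝓝 b)) (hxy : MutStable dist r x y) :
    seqDist dist r x y ≤ a + b := by
  obtain ⟨L, hL⟩ := hxy
  rw [seqDist, hL.limUnder_eq]
  refine le_of_tendsto_of_tendsto' hL (hx.add hy) fun n => ?_
  rw [← add_div]
  exact div_le_div_of_nonneg_right (dist_triangle_right _ _ _) (hr n)

lemma sub_le_seqDist (hr : ∀ n, 0 ≤ r n) {x y : ℕ → Y} {a b : ℝ}
    (hx : Tendsto (fun n => dist (x n) p / r n) atTop (𝓝 a))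
    (hy : Tendsto (fun n => dist (y n) p / r n) atTop (𝓝 b)) (hxy : MutStable dist r x y) :
    a - b ≤ seqDist dist r x y := by
  obtain ⟨L, hL⟩ := hxy
  rw [seqDist, hL.limUnder_eq]
  refine le_of_tendsto_of_tendsto' (hx.sub hy) hL fun n => ?_
  rw [← sub_div]
  exact div_le_div_of_nonneg_right (by linarith [dist_triangle (x n) (y n) p]) (hr n)

lemma IsMutStableSet.exists_mem_tendsto_gt (hr : ∀ n, 0 ≤ r n) {C : Set (ℕ → Y)}
    (hC : IsMutStableSet dist p r C)
    (hub : ¬ ∃ M, ∀ x ∈ C, ∀ y ∈ C, seqDist dist r x y ≤ M) (M : ℝ) :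
    ∃ z ∈ C, ∃ s, M < s ∧ Tendsto (fun n => dist (z n) p / r n) atTop (𝓝 s) := by
  by_contra! h
  refine hub ⟨M + M, fun x hx y hy => ?_⟩
  obtain ⟨a, ha⟩ := (hC.1 x hx).2
  obtain ⟨b, hb⟩ := (hC.1 y hy).2
  have haM : a ≤ M := not_lt.1 fun h' => h x hx a h' ha
  have hbM : b ≤ M := not_lt.1 fun h' => h y hy b h' hb
  linarith [seqDist_le_add hr ha hb (hC.2 x hx y hy)]

lemma exists_subseq_forall_mutStable {ι : Type*} [Countable ι] (p : Y) (ζ : ι → ℕ → Y)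
    {τ : ℕ → ℝ} (hτ : Tendsto τ atTop atTop)
    (hζ : ∀ i, ∃ B, ∀ᶠ n in atTop, dist (ζ i n) p ≤ B * τ n) :
    ∃ φ : ℕ → ℕ, StrictMono φ ∧ ScalingSeq (τ ∘ φ) ∧
      (∀ i, ∃ L, Tendsto (fun n => dist (ζ i (φ n)) p / τ (φ n)) atTop (𝓝 L)) ∧
      ∀ i j, MutStable dist (τ ∘ φ) (ζ i ∘ φ) (ζ j ∘ φ) := by
  -- `ζ' none` is the constant sequence `p`, so distances to `p` become mutual distances.
  let ζ' : Option ι → ℕ → Y := fun o n => o.elim p (ζ · n)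
  have hζ' : ∀ o, ∃ B, ∀ᶠ n in atTop, dist (ζ' o n) p ≤ B * τ n := by
    rintro (_ | i)
    · exact ⟨0, Eventually.of_forall fun n => by simp [ζ']⟩
    · exact hζ i
  choose B hB using hζ'
  have hτ0 : ∀ᶠ n in atTop, 0 < τ n := hτ.eventually_gt_atTop 0
  obtain ⟨φ₀, hφ₀, hlim⟩ := exists_subseq_forall_tendsto
    (fun (o : Option ι × Option ι) n => dist (ζ' o.1 n) (ζ' o.2 n) / τ n) fun o => by
      refine ⟨B o.1 + B o.2, ?_⟩
      filter_upwards [hB o.1, hB o.2, hτ0] with n h₁ h₂ hτn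
      rw [abs_of_nonneg (by positivity), div_le_iff₀ hτn, add_mul]
      exact (dist_triangle_right _ _ _).trans (add_le_add h₁ h₂)
  obtain ⟨ψ, hψ, hτψ⟩ := extraction_of_eventually_atTop (hφ₀.tendsto_atTop.eventually hτ0)
  have hlim' : ∀ o₁ o₂, ∃ L, Tendsto (fun n => dist (ζ' o₁ (φ₀ (ψ n))) (ζ' o₂ (φ₀ (ψ n))) /
      τ (φ₀ (ψ n))) atTop (𝓝 L) := fun o₁ o₂ =>
    let ⟨L, hL⟩ := hlim (o₁, o₂)
    ⟨L, hL.comp hψ.tendsto_atTop⟩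
  exact ⟨φ₀ ∘ ψ, hφ₀.comp hψ, ⟨hτψ, hτ.comp (hφ₀.comp hψ).tendsto_atTop⟩,
    fun i => hlim' (some i) none, fun i j => hlim' (some i) (some j)⟩

lemma exists_unbounded_isPretangent {τ : ℕ → ℝ} (hτ : Tendsto τ atTop atTop) (ξ : ℕ → ℕ → Y)
    (hξ : ∀ k : ℕ, ∃ C, ∀ᶠ n in atTop,
      ((k : ℝ) + 1) * τ n ≤ dist (ξ k n) p ∧ dist (ξ k n) p ≤ C * τ n) :
    ∃ r, ScalingSeq r ∧ ∃ Ω, IsPretangent dist p r Ω ∧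
      ¬ ∃ M, ∀ x ∈ Ω, ∀ y ∈ Ω, seqDist dist r x y ≤ M := by
  choose C hC using hξ
  obtain ⟨φ, hφ, hr, hlim, hst⟩ :=
    exists_subseq_forall_mutStable p ξ hτ fun k => ⟨C k, (hC k).mono fun _ h => h.2⟩
  choose L hL using hlim
  have hCφ : ∀ k : ℕ, ∀ᶠ n in atTop, ((k : ℝ) + 1) * τ (φ n) ≤ dist (ξ k (φ n)) p ∧
      dist (ξ k (φ n)) p ≤ C k * τ (φ n) := fun k => hφ.tendsto_atTop.eventually (hC k)
  have hLk : ∀ k : ℕ, (k : ℝ) + 1 ≤ L k := fun k =>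
    ge_of_tendsto (hL k) ((hCφ k).mono fun n h => (le_div_iff₀ (hr.1 n)).2 h.1)
  have hL0 : L 0 ≤ C 0 :=
    le_of_tendsto (hL 0) ((hCφ 0).mono fun n h => (div_le_iff₀ (hr.1 n)).2 h.2)
  have hadm : ∀ k, SeqAdm dist p (τ ∘ φ) (ξ k ∘ φ) := by
    refine fun k => ⟨tendsto_atTop_mono' _ ((hCφ k).mono fun n h => ?_) hr.2, L k, hL k⟩
    exact (le_mul_of_one_le_left (hr.1 n).le (by linarith [k.cast_nonneg (α := ℝ)])).trans h.1
  obtain ⟨Ω, hΩ, hSΩ⟩ := IsMutStableSet.exists_isPretangent_superset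
    (S := Set.range fun k => ξ k ∘ φ)
    ⟨by rintro _ ⟨k, rfl⟩; exact hadm k, by rintro _ ⟨i, rfl⟩ _ ⟨j, rfl⟩; exact hst i j⟩
  refine ⟨τ ∘ φ, hr, Ω, hΩ, ?_⟩
  rintro ⟨M, hM⟩
  obtain ⟨k, hk⟩ := exists_nat_gt (M + C 0)
  have hfar := sub_le_seqDist (x := ξ k ∘ φ) (y := ξ 0 ∘ φ) (fun n => (hr.1 n).le)
    (hL k) (hL 0) (hst k 0)
  linarith [hM _ (hSΩ ⟨k, rfl⟩) _ (hSΩ ⟨0, rfl⟩), hLk k]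

end Pretangent

section MetricSpace

variable {X : Type*} [MetricSpace X]

lemma not_bddAbove_range_dist (hX : ¬ Bornology.IsBounded (Set.univ : Set X)) (p : X) :
    ¬ BddAbove (Set.range fun x : X => dist x p) := by
  rintro ⟨R, hR⟩
  exact hX ((Metric.isBounded_closedBall (x := p) (r := R)).subset fun x _ => hR ⟨x, rfl⟩)

lemma exists_unbounded_isPretangent_of_forall_not_tauStronglyPorous
    (hX : ¬ Bornology.IsBounded (Set.univ : Set X)) (p : X) {τ : ℕ → ℝ}
    (hτ : MemEInfty (Set.range fun x : X => dist x p) τ)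
    (hno : ∀ φ : ℕ → ℕ, StrictMono φ →
      ¬ TauStronglyPorousAtInfty (Set.range fun x : X => dist x p) (τ ∘ φ)) :
    ∃ r, ScalingSeq r ∧ ∃ C, IsPretangent dist p r C ∧
      ¬ ∃ M, ∀ x ∈ C, ∀ y ∈ C, seqDist dist r x y ≤ M := by
  obtain ⟨hτE, -, hτ⟩ := hτ
  have hlevel : ∀ k : ℕ, ∃ C, ∀ᶠ n in atTop,
      ∃ x : X, ((k : ℝ) + 1) * τ n ≤ dist x p ∧ dist x p ≤ C * τ n := by
    intro k
    by_contra! h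
    obtain ⟨φ, hφ, hpor⟩ := exists_strictMono_tauStronglyPorous_of_frequently_disjoint
      (not_bddAbove_range_dist hX p) hτE hτ (c := k + 1) (by linarith [k.cast_nonneg (α := ℝ)])
      fun C => (h C).mono fun n hn => Set.disjoint_left.2 <| by
        rintro _ ⟨h₁, h₂⟩ ⟨x, rfl⟩
        exact (hn x h₁).not_ge h₂
    exact hno φ hφ hpor
  choose C hC using hlevel
  choose ξ hξ using fun k => (hC k).choice
  exact exists_unbounded_isPretangent hτ ξ fun k => ⟨C k, hξ k⟩

lemma not_omegaStronglyPorousAtInfty_of_tendsto_div {p : X} {w : ℕ → X}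
    (hw : Tendsto (fun n => dist (w n) p) atTop atTop)
    (hz : ∀ K, ∃ (z : ℕ → X) (ρ : ℝ), K < ρ ∧
      Tendsto (fun n => dist (z n) p / dist (w n) p) atTop (𝓝 ρ)) :
    ¬ OmegaStronglyPorousAtInfty (Set.range fun x : X => dist x p) := by
  intro hpor
  obtain ⟨ψ, hψ, hwψ⟩ := strictMono_subseq_of_tendsto_atTop hw
  set τ : ℕ → ℝ := fun n => dist (w (ψ n)) p
  obtain ⟨φ, hφ, hτφ⟩ := hpor τ
    ⟨fun n => ⟨_, rfl⟩, ⟨0, fun n _ => (hwψ n.lt_succ_self).le⟩, hw.comp hψ.tendsto_atTop⟩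
  obtain ⟨c, hc⟩ := hτφ.exists_eventually_disjoint
  obtain ⟨z, ρ, hcρ, hzρ⟩ := hz c
  have hρ : Tendsto (fun n => dist (z (ψ (φ n))) p / τ (φ n)) atTop (𝓝 ρ) :=
    hzρ.comp (hψ.comp hφ).tendsto_atTop
  have hτ0 : ∀ᶠ n in atTop, 0 < τ (φ n) :=
    ((hw.comp hψ.tendsto_atTop).comp hφ.tendsto_atTop).eventually_gt_atTop 0
  obtain ⟨n, hn, hτn, hdisj⟩ :=
    ((hρ.eventually (Ioo_mem_nhds hcρ (lt_add_one ρ))).and (hτ0.and (hc (ρ + 1)))).exists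
  rw [lt_div_iff₀ hτn, div_lt_iff₀ hτn] at hn
  exact Set.disjoint_left.1 hdisj hn ⟨_, rfl⟩

lemma not_omegaStronglyPorousAtInfty_of_unbounded {p : X} {r : ℕ → ℝ} (hr : ∀ n, 0 < r n)
    {C : Set (ℕ → X)} (hC : IsMutStableSet dist p r C)
    (hub : ¬ ∃ M, ∀ x ∈ C, ∀ y ∈ C, seqDist dist r x y ≤ M) :
    ¬ OmegaStronglyPorousAtInfty (Set.range fun x : X => dist x p) := by
  have hlarge := hC.exists_mem_tendsto_gt (fun n => (hr n).le) hub
  obtain ⟨w, hw, s₀, hs₀, hws₀⟩ := hlarge 0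
  refine not_omegaStronglyPorousAtInfty_of_tendsto_div (hC.1 w hw).1 fun K => ?_
  obtain ⟨z, -, s, hs, hzs⟩ := hlarge (K * s₀)
  exact ⟨z, s / s₀, (lt_div_iff₀ hs₀).2 hs,
    (hzs.div hws₀ hs₀.ne').congr fun n => div_div_div_cancel_right₀ (hr n).ne' _ _⟩

end MetricSpace

/-- **Theorem on boundedness.** Let `(X,d)` be an unbounded metric space
and `p ∈ X`.  All pretangent spaces to `X` at infinity (over all scaling sequences) are
bounded if and only if the set `S_p(X) = {d(x,p) : x ∈ X}` is `ω`-strongly porous at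
infinity. -/
theorem all_pretangent_bounded_iff_omegaStronglyPorous {X : Type*} [MetricSpace X]
    (hX : ¬ Bornology.IsBounded (Set.univ : Set X)) (p : X) :
    (∀ r : ℕ → ℝ, ScalingSeq r → ∀ C : Set (ℕ → X), IsPretangent dist p r C →
      ∃ M : ℝ, ∀ x ∈ C, ∀ y ∈ C, seqDist dist r x y ≤ M) ↔
    OmegaStronglyPorousAtInfty (Set.range fun x : X => dist x p) := by
  constructor
  · intro hbdd τ hτ
    by_contra! hno
    obtain ⟨r, hr, C, hC, hub⟩ :=
      exists_unbounded_isPretangent_of_forall_not_tauStronglyPorous hX p hτ hno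
    exact hub (hbdd r hr C hC)
  · intro hpor r hr C hC
    by_contra hub
    exact not_omegaStronglyPorousAtInfty_of_unbounded hr.1 hC.1.isMutStableSet hub hpor
end

section
/- Let (X,d) be an unbounded metric space and p ∈ X. The following statements are equivalent: (i) there exists an unbounded pretangent space Ω_{∞,r̃}^X; (ii) there exists a scaling sequence r̃ = (r_n) such that the Kuratowski lower limit Liminf_{n→∞} (1/r_n)S_p(X) (taken in ℝ with the standard metric) is an unbounded subset of ℝ⁺; (iii) the set S_p(X) is not ω-strongly porous at infinity. -/
/-!
Write `E = S_p(X)`. A number `t` lies in the Kuratowski lower limit of `r_n⁻¹ E` exactly when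
`t = lim e_n / r_n` for some `e_n ∈ E`, that is, when `t = d̃_r̃(x̃)` for an admissible `x̃`.

(i) ⇒ (ii) since `ρ(α, β) ≤ d̃(α) + d̃(β)`. (ii) ⇒ (i): pick `x̃_k` with `d̃(x̃_k) = t_k > k`;
along a diagonal subsequence of `r̃` the `x̃_k` become pairwise mutually stable, Zorn's lemma
extends the clique they generate to a pretangent space, and it is unbounded as
`ρ(x̃_0, x̃_k) ≥ t_k - t_0`.

(ii) ⇒ (iii): take `t > 0` in the lower limit, `e_n / r_n → t`, and a monotone subsequence `τ̃` of
`(e_n)`. If `E` were `τ̃'`-strongly porous with gaps `(a_n, b_n)`, then `a_n < c₂ τ'_n` and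
`b_n / a_n → ∞` force every sequence of `E` whose ratio to `τ̃'` converges to have limit at most
`c₂`; but each `t'` of the lower limit yields such a sequence with limit `t' / t`.

(iii) ⇒ (ii): take `τ̃ ∈ Ẽ^i_∞` without strongly porous subsequences, a free ultrafilter `U`, and
the lower limit `Z` of `τ_n⁻¹ E` along `U`. If `Z` is unbounded, a diagonal subsequence of `τ̃` is
a scaling sequence as in (ii). If `Z < c`, compactness of `[c, (k + 2) c]` shows that
`E ∩ [c τ_n, (k + 2) c τ_n] = ∅` for `U`-almost every `n`; the gaps of `E` around these intervals,
for an increasing choice `n_k`, make `E` strongly porous along `(τ_{n_k})`.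
-/

open Filter Topology

/-- The Kuratowski lower limit of a sequence of subsets of `ℝ` (with the standard
metric): `Liminf Kₙ = {y : lim dist(y,Kₙ) = 0}`. -/
def kuratowskiLiminf (K : ℕ → Set ℝ) : Set ℝ :=
  {y : ℝ | Tendsto (fun n => Metric.infDist y (K n)) atTop (𝓝 0)}


open Set Metric

section Subsequences

theorem Filter.Tendsto.exists_monotone_subseq {β : Type*} [LinearOrder β] {e : ℕ → β}
    (he : Tendsto e atTop atTop) : ∃ σ : ℕ → ℕ, StrictMono σ ∧ Monotone (e ∘ σ) := by
  obtain ⟨g, hmono | hanti⟩ := exists_increasing_or_nonincreasing_subseq (· ≤ ·) e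
  · exact ⟨g, g.strictMono, monotone_nat_of_le_succ fun n => hmono n (n + 1) n.lt_succ_self⟩
  · obtain ⟨n, hle, hn⟩ := (((he.comp g.strictMono.tendsto_atTop).eventually_ge_atTop
      (e (g 0))).and (eventually_gt_atTop 0)).exists
    exact absurd hle (hanti 0 n hn)

theorem Filter.Tendsto.exists_subseq_of_le_atTop {Y : Type*} [TopologicalSpace Y]
    [FirstCountableTopology Y] {F : Filter ℕ} [F.NeBot] {v : ℕ → Y} {y : Y}
    (h : Tendsto v F (𝓝 y)) (hF : F ≤ atTop) :
    ∃ ψ : ℕ → ℕ, StrictMono ψ ∧ Tendsto (v ∘ ψ) atTop (𝓝 y) :=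
  (h.mapClusterPt.mono hF).tendsto_subseq

theorem exists_subseq_forall_tendsto_s13 {ι Y : Type*} [Countable ι] [PseudoMetricSpace Y]
    [ProperSpace Y] {u : ι → ℕ → Y} (hu : ∀ i, Bornology.IsBounded (range (u i))) :
    ∃ φ : ℕ → ℕ, StrictMono φ ∧ ∃ L : ι → Y, ∀ i, Tendsto (u i ∘ φ) atTop (𝓝 (L i)) := by
  obtain ⟨L, -, φ, hφ, hL⟩ := (isCompact_univ_pi fun i => (hu i).isCompact_closure).tendsto_subseq
    (x := fun n i => u i n) fun n => mem_univ_pi.2 fun i => subset_closure (mem_range_self n)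
  exact ⟨φ, hφ, L, tendsto_pi_nhds.1 hL⟩

theorem tendsto_atTop_of_tendsto_div {α : Type*} {l : Filter α} {f r : α → ℝ} {t : ℝ}
    (hr : Tendsto r l atTop) (h : Tendsto (fun n => f n / r n) l (𝓝 t)) (ht : 0 < t) :
    Tendsto f l atTop :=
  (h.pos_mul_atTop ht hr).congr'
    ((hr.eventually_gt_atTop 0).mono fun _ hn => div_mul_cancel₀ _ hn.ne')

end Subsequences

section KuratowskiLiminf

theorem mem_kuratowskiLiminf_iff {K : ℕ → Set ℝ} (hK : ∀ n, (K n).Nonempty) {y : ℝ} :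
    y ∈ kuratowskiLiminf K ↔ ∃ z : ℕ → ℝ, (∀ n, z n ∈ K n) ∧ Tendsto z atTop (𝓝 y) := by
  constructor
  · intro hy
    choose z hzK hz using fun n : ℕ =>
      (infDist_lt_iff (hK n)).1 (lt_add_of_pos_right (infDist y (K n)) Nat.one_div_pos_of_nat)
    refine ⟨z, hzK, tendsto_iff_dist_tendsto_zero.2 (squeeze_zero (fun n => dist_nonneg)
      (fun n => (dist_comm (z n) y).trans_le (hz n).le) ?_)⟩
    simpa using hy.add tendsto_one_div_add_atTop_nhds_zero_nat
  · rintro ⟨z, hzK, hz⟩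
    refine squeeze_zero (fun n => infDist_nonneg) (fun n => infDist_le_dist_of_mem (hzK n)) ?_
    simpa only [dist_comm y] using tendsto_iff_dist_tendsto_zero.1 hz

def rescale (E : Set ℝ) (r : ℕ → ℝ) (n : ℕ) : Set ℝ :=
  (fun s => (1 / r n) * s) '' E

theorem mem_rescale {E : Set ℝ} {r : ℕ → ℝ} {n : ℕ} {x : ℝ} :
    x ∈ rescale E r n ↔ ∃ e ∈ E, e / r n = x := by
  simp only [rescale, mem_image, one_div_mul_eq_div]

theorem mem_kuratowskiLiminf_rescale_iff {E : Set ℝ} (hE : E.Nonempty) {r : ℕ → ℝ} {t : ℝ} :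
    t ∈ kuratowskiLiminf (rescale E r) ↔
      ∃ e : ℕ → ℝ, (∀ n, e n ∈ E) ∧ Tendsto (fun n => e n / r n) atTop (𝓝 t) := by
  rw [mem_kuratowskiLiminf_iff (K := rescale E r) fun n => hE.image _]
  constructor
  · rintro ⟨z, hz, hzt⟩
    choose e he hez using fun n => mem_rescale.1 (hz n)
    exact ⟨e, he, by simpa only [hez] using hzt⟩
  · rintro ⟨e, he, het⟩
    exact ⟨_, fun n => mem_rescale.2 ⟨e n, he n, rfl⟩, het⟩

theorem Ultrafilter.exists_tendsto_infDist_zero {α : Type*} (U : Ultrafilter α) {K : α → Set ℝ}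
    {S : Set ℝ} (hS : IsCompact S) (h : ∀ᶠ n in U, (K n ∩ S).Nonempty) :
    ∃ s ∈ S, Tendsto (fun n => infDist s (K n)) U (𝓝 0) := by
  obtain ⟨w, hwKS⟩ := h.choice
  obtain ⟨s, hs, hws⟩ := hS.ultrafilter_le_nhds' (U.map w) (hwKS.mono fun _ hn => hn.2)
  refine ⟨s, hs, squeeze_zero' (Eventually.of_forall fun n => infDist_nonneg)
    (hwKS.mono fun n hn => infDist_le_dist_of_mem hn.1) ?_⟩
  simpa only [dist_comm s] using tendsto_iff_dist_tendsto_zero.1 (hws : Tendsto w U (𝓝 s))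

theorem Ultrafilter.exists_subseq_not_bddAbove_kuratowskiLiminf {U : Ultrafilter ℕ}
    (hU : (U : Filter ℕ) ≤ atTop) {K : ℕ → Set ℝ}
    (hZ : ¬ BddAbove {t | Tendsto (fun n => infDist t (K n)) U (𝓝 0)}) :
    ∃ ψ : ℕ → ℕ, StrictMono ψ ∧ ¬ BddAbove (kuratowskiLiminf (K ∘ ψ)) := by
  choose t ht htk using fun k : ℕ => not_bddAbove_iff.1 hZ k
  obtain ⟨ψ, hψ, hlim⟩ := Tendsto.exists_subseq_of_le_atTop
    (v := fun n k => infDist (t k) (K n)) (y := 0) (tendsto_pi_nhds.2 ht) hU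
  refine ⟨ψ, hψ, not_bddAbove_iff.2 fun M => ?_⟩
  obtain ⟨k, hk⟩ := exists_nat_gt M
  exact ⟨t k, tendsto_pi_nhds.1 hlim k, hk.trans (htk k)⟩

end KuratowskiLiminf

section Porosity

theorem IsGapComponent.notMem {E : Set ℝ} {a b x : ℝ} (h : IsGapComponent E a b)
    (hx : x ∈ Ioo a b) : x ∉ E :=
  fun hxE => (interior_subset (h.2.1 hx)).2 hxE

theorem notMem_interior_Ici_diff_of_mem_closure {E : Set ℝ} {a : ℝ} (ha : a ∈ closure E) :
    a ∉ interior (Ici 0 \ E) := fun h =>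
  (interior_compl (s := E) ▸ interior_mono (sdiff_subset_compl _ _) h) ha

theorem isGapComponent_sSup_sInf {E : Set ℝ} {u v w e : ℝ} (huv : u < v) (hw : w ∈ E)
    (hw0 : 0 ≤ w) (hwu : w ≤ u) (he : e ∈ E) (hve : v ≤ e) (hgap : ∀ x ∈ E, x ∉ Icc u v) :
    IsGapComponent E (sSup (E ∩ Iic u)) (sInf (E ∩ Ici v)) := by
  have hne : (E ∩ Iic u).Nonempty := ⟨w, hw, hwu⟩
  have hbdd : BddAbove (E ∩ Iic u) := ⟨u, fun x hx => hx.2⟩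
  have hne' : (E ∩ Ici v).Nonempty := ⟨e, he, hve⟩
  have hbdd' : BddBelow (E ∩ Ici v) := ⟨v, fun x hx => hx.2⟩
  have hwa : w ≤ sSup (E ∩ Iic u) := le_csSup hbdd ⟨hw, hwu⟩
  have hvb : v ≤ sInf (E ∩ Ici v) := le_csInf hne' fun x hx => hx.2
  refine ⟨(csSup_le hne fun x hx => hx.2).trans_lt (huv.trans_le hvb),
    interior_maximal (fun x hx => ⟨hw0.trans (hwa.trans hx.1.le), fun hxE => ?_⟩) isOpen_Ioo,
    notMem_interior_Ici_diff_of_mem_closure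
      (closure_mono inter_subset_left (csSup_mem_closure hne hbdd)),
    notMem_interior_Ici_diff_of_mem_closure
      (closure_mono inter_subset_left (csInf_mem_closure hne' hbdd'))⟩
  rcases le_or_gt x u with hxu | hux
  · exact hx.1.not_ge (le_csSup hbdd ⟨hxE, hxu⟩)
  rcases le_or_gt v x with hvx | hxv
  · exact hx.2.not_ge (csInf_le hbdd' ⟨hxE, hvx⟩)
  exact hgap x hxE ⟨hux.le, hxv.le⟩

theorem tauStronglyPorousAtInfty_of_forall_gap {E : Set ℝ} {τ : ℕ → ℝ} {c : ℝ}
    (hτ : Monotone τ) (hτ0 : ∀ n, 0 < τ n) (hτE : ∀ n, τ n ∈ E) (hτtop : Tendsto τ atTop atTop)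
    (hc : 1 ≤ c) (hgap : ∀ n : ℕ, ∀ e ∈ E, e ∉ Icc (c * τ n) ((n + 2) * c * τ n)) :
    TauStronglyPorousAtInfty E τ := by
  set a := fun n => sSup (E ∩ Iic (c * τ n))
  set b := fun n : ℕ => sInf (E ∩ Ici ((n + 2) * c * τ n))
  have hτc : ∀ n, τ n ≤ c * τ n := fun n => le_mul_of_one_le_left (hτ0 n).le hc
  have hgapc : ∀ n : ℕ, c * τ n < (n + 2) * c * τ n := fun n => by
    have := mul_pos (zero_lt_one.trans_le hc) (hτ0 n)
    nlinarith [n.cast_nonneg (α := ℝ)]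
  have hbig : ∀ n : ℕ, ∃ e ∈ E, (n + 2) * c * τ n ≤ e := fun n =>
    let ⟨m, hm⟩ := (hτtop.eventually_ge_atTop ((n + 2) * c * τ n)).exists
    ⟨τ m, hτE m, hm⟩
  have hbdd : ∀ n, BddAbove (E ∩ Iic (c * τ n)) := fun n => ⟨_, fun x hx => hx.2⟩
  have hτa : ∀ n, τ n ≤ a n := fun n => le_csSup (hbdd n) ⟨hτE n, hτc n⟩
  have hac : ∀ n, a n ≤ c * τ n := fun n => csSup_le ⟨τ n, hτE n, hτc n⟩ fun x hx => hx.2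
  have hvb : ∀ n, (n + 2) * c * τ n ≤ b n := fun n =>
    le_csInf (hbig n) fun x hx => hx.2
  have hb : ∀ n, 0 < b n := fun n =>
    (mul_pos (zero_lt_one.trans_le hc) (hτ0 n)).trans ((hgapc n).trans_le (hvb n))
  have hab : ∀ n : ℕ, a n / b n ≤ 1 / (n + 1) := fun n => by
    rw [div_le_div_iff₀ (hb n) (by positivity)]
    nlinarith [hac n, hvb n, hτa n, hτ0 n]
  refine ⟨a, b, ⟨fun n => ?_, ⟨0, fun n _ => ?_⟩, tendsto_atTop_mono hτa hτtop, ?_⟩,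
    1 / 2, c + 1, by norm_num, by linarith, fun n => ⟨by linarith [hτ0 n, hτa n], ?_⟩⟩
  · obtain ⟨e, he, hle⟩ := hbig n
    exact isGapComponent_sSup_sInf (hgapc n) (hτE n) (hτ0 n).le (hτc n) he hle (hgap n)
  · exact csSup_le_csSup (hbdd (n + 1)) ⟨τ n, hτE n, hτc n⟩ (inter_subset_inter_right _
      (Iic_subset_Iic.2 (mul_le_mul_of_nonneg_left (hτ n.le_succ) (by linarith))))
  · have hab0 : Tendsto (fun n => a n / b n) atTop (𝓝 0) :=
      squeeze_zero (fun n => div_nonneg ((hτ0 n).le.trans (hτa n)) (hb n).le)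
        hab tendsto_one_div_add_atTop_nhds_zero_nat
    have h1 := (tendsto_const_nhds (x := (1 : ℝ))).sub hab0
    rw [sub_zero] at h1
    exact h1.congr fun n => by rw [sub_div, div_self (hb n).ne']
  · nlinarith [hτ0 n, hac n]

theorem MemIEi.tendsto_div {E : Set ℝ} {a b : ℕ → ℝ} (h : MemIEi E a b) :
    Tendsto (fun n => a n / b n) atTop (𝓝 0) := by
  have hb : ∀ᶠ n in atTop, b n ≠ 0 :=
    (h.2.2.1.eventually_gt_atTop 0).mono fun n hn => (hn.trans (h.1 n).1).ne'
  have := (tendsto_const_nhds (x := (1 : ℝ))).sub h.2.2.2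
  rw [sub_self] at this
  refine this.congr' (hb.mono fun n hn => ?_)
  field_simp
  ring

theorem TauStronglyPorousAtInfty.bddAbove_ratio_limits {E : Set ℝ} {τ : ℕ → ℝ}
    (h : TauStronglyPorousAtInfty E τ) :
    BddAbove {q | ∃ e : ℕ → ℝ, (∀ n, e n ∈ E) ∧ Tendsto (fun n => e n / τ n) atTop (𝓝 q)} := by
  obtain ⟨a, b, hab, c₁, c₂, hc₁, hc₂, hcomp⟩ := h
  refine ⟨c₂, fun q ⟨e, heE, he⟩ => le_of_not_gt fun hqc => ?_⟩
  have hq : 0 < q + 1 := by linarith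
  obtain ⟨n, ha, hsmall, hratio⟩ := ((hab.2.2.1.eventually_gt_atTop 0).and
    ((hab.tendsto_div.eventually (gt_mem_nhds (div_pos hc₁ hq))).and
      (he.eventually (Ioo_mem_nhds hqc (lt_add_one q))))).exists
  have hτ : 0 < τ n := pos_of_mul_pos_right (ha.trans (hcomp n).2) hc₂.le
  have hb : 0 < b n := ha.trans (hab.1 n).1
  have h1 : e n < (q + 1) * τ n := (div_lt_iff₀ hτ).1 hratio.2
  have h2 : a n * (q + 1) < c₁ * b n := (div_lt_div_iff₀ hb hq).1 hsmall
  have h3 : (q + 1) * (c₁ * τ n) < (q + 1) * a n := mul_lt_mul_of_pos_left (hcomp n).1 hq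
  refine (hab.1 n).notMem ⟨?_, ?_⟩ (heE n)
  · exact (hcomp n).2.trans ((lt_div_iff₀ hτ).1 hratio.1)
  · exact lt_of_mul_lt_mul_left (by linarith [mul_lt_mul_of_pos_left h1 hc₁]) hc₁.le

end Porosity

section OmegaPorosity

theorem not_omegaStronglyPorousAtInfty_of_not_bddAbove {E : Set ℝ} (hE : E.Nonempty)
    {r : ℕ → ℝ} (hr : ScalingSeq r) (hL : ¬ BddAbove (kuratowskiLiminf (rescale E r))) :
    ¬ OmegaStronglyPorousAtInfty E := by
  intro hω
  obtain ⟨t, ht, ht0⟩ := not_bddAbove_iff.1 hL 0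
  obtain ⟨e, heE, het⟩ := (mem_kuratowskiLiminf_rescale_iff hE).1 ht
  have he : Tendsto e atTop atTop := tendsto_atTop_of_tendsto_div hr.2 het ht0
  obtain ⟨σ, hσ, hmono⟩ := he.exists_monotone_subseq
  obtain ⟨φ, hφ, hpor⟩ := hω (e ∘ σ)
    ⟨fun n => heE _, ⟨0, fun n _ => hmono n.le_succ⟩, he.comp hσ.tendsto_atTop⟩
  obtain ⟨B, hB⟩ := hpor.bddAbove_ratio_limits
  refine hL ⟨t * B, fun t' ht' => ?_⟩
  obtain ⟨e', he'E, he't⟩ := (mem_kuratowskiLiminf_rescale_iff hE).1 ht'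
  have hratio : Tendsto (fun n => e' n / e n) atTop (𝓝 (t' / t)) :=
    (he't.div het ht0.ne').congr fun n => div_div_div_cancel_right₀ (hr.1 n).ne' _ _
  have htB : t' / t ≤ B := hB ⟨e' ∘ σ ∘ φ, fun n => he'E _, hratio.comp (hσ.comp hφ).tendsto_atTop⟩
  rwa [div_le_iff₀ ht0, mul_comm] at htB

theorem exists_monotone_of_not_omegaStronglyPorousAtInfty {E : Set ℝ}
    (h : ¬ OmegaStronglyPorousAtInfty E) :
    ∃ τ : ℕ → ℝ, Monotone τ ∧ (∀ n, 0 < τ n) ∧ (∀ n, τ n ∈ E) ∧ Tendsto τ atTop atTop ∧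
      ∀ φ : ℕ → ℕ, StrictMono φ → ¬ TauStronglyPorousAtInfty E (τ ∘ φ) := by
  simp only [OmegaStronglyPorousAtInfty, not_forall, not_exists, not_and] at h
  obtain ⟨τ, ⟨hτE, ⟨N, hN⟩, hτ⟩, hnot⟩ := h
  obtain ⟨M, hM⟩ := eventually_atTop.1 ((hτ.eventually_gt_atTop 0).and (eventually_ge_atTop N))
  refine ⟨fun n => τ (n + M), monotone_nat_of_le_succ fun n => ?_, fun n => (hM _ le_add_self).1,
    fun n => hτE _, hτ.comp (tendsto_add_atTop_nat M), fun φ hφ => hnot _ (hφ.add_const M)⟩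
  rw [add_right_comm]
  exact hN _ ((hM M le_rfl).2.trans le_add_self)

theorem exists_not_bddAbove_of_not_omegaStronglyPorousAtInfty {E : Set ℝ}
    (h : ¬ OmegaStronglyPorousAtInfty E) :
    ∃ r : ℕ → ℝ, ScalingSeq r ∧ ¬ BddAbove (kuratowskiLiminf (rescale E r)) := by
  obtain ⟨τ, hτ, hτ0, hτE, hτtop, hnot⟩ := exists_monotone_of_not_omegaStronglyPorousAtInfty h
  obtain ⟨U, hU⟩ := exists_ultrafilter_le (atTop : Filter ℕ)
  by_cases hZ : BddAbove {t | Tendsto (fun n => infDist t (rescale E τ n)) U (𝓝 0)}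
  · exfalso
    obtain ⟨c, hc1, hc⟩ : ∃ c, 1 ≤ c ∧
        ∀ t, Tendsto (fun n => infDist t (rescale E τ n)) U (𝓝 0) → t < c := by
      obtain ⟨M, hM⟩ := hZ
      exact ⟨max M 0 + 1, by linarith [le_max_right M 0],
        fun t ht => (hM ht).trans_lt (by linarith [le_max_left M 0])⟩
    have hgap : ∀ k : ℕ, ∀ᶠ n in U, ¬ (rescale E τ n ∩ Icc c ((k + 2) * c)).Nonempty :=
      fun k => Ultrafilter.eventually_not.2 fun hne => by
        obtain ⟨s, hs, hsZ⟩ := U.exists_tendsto_infDist_zero isCompact_Icc hne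
        exact (hc s hsZ).not_ge hs.1
    obtain ⟨ψ, hψ, hψgap⟩ :=
      extraction_forall_of_frequently fun k => (hgap k).frequently.filter_mono hU
    refine hnot ψ hψ (tauStronglyPorousAtInfty_of_forall_gap (hτ.comp hψ.monotone)
      (fun k => hτ0 _) (fun k => hτE _) (hτtop.comp hψ.tendsto_atTop) hc1
      fun k e he hmem => hψgap k ⟨e / τ (ψ k), mem_rescale.2 ⟨e, he, rfl⟩, ?_, ?_⟩)
    · exact (le_div_iff₀ (hτ0 _)).2 hmem.1
    · exact (div_le_iff₀ (hτ0 _)).2 hmem.2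
  · obtain ⟨ψ, hψ, hL⟩ := U.exists_subseq_not_bddAbove_kuratowskiLiminf hU hZ
    exact ⟨τ ∘ ψ, ⟨fun n => hτ0 _, hτtop.comp hψ.tendsto_atTop⟩, hL⟩

end OmegaPorosity

section Pretangent

theorem IsCliqueSet.sUnion_of_isChain {Y : Type*} {d : Y → Y → ℝ} {p : Y} {r : ℕ → ℝ}
    {S : Set (Set (ℕ → Y))} (hS : ∀ D ∈ S, IsCliqueSet d p r D) (hchain : IsChain (· ⊆ ·) S) :
    IsCliqueSet d p r (⋃₀ S) := by
  refine ⟨?_, ?_, ?_⟩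
  · rintro x ⟨D, hD, hx⟩
    exact (hS D hD).1 x hx
  · rintro x ⟨D, hD, hx⟩ y hy hxy
    exact ⟨D, hD, (hS D hD).2.1 x hx y hy hxy⟩
  · rintro x ⟨D, hD, hx⟩ y ⟨D', hD', hy⟩
    rcases hchain.total hD hD' with h | h
    · exact (hS D' hD').2.2 x (h hx) y hy
    · exact (hS D hD).2.2 x hx y (h hy)

theorem IsCliqueSet.exists_isPretangent_superset {Y : Type*} {d : Y → Y → ℝ} {p : Y}
    {r : ℕ → ℝ} {C₀ : Set (ℕ → Y)} (h : IsCliqueSet d p r C₀) :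
    ∃ C, C₀ ⊆ C ∧ IsPretangent d p r C := by
  obtain ⟨C, hC₀C, hC, hmax⟩ := zorn_subset_nonempty {D | IsCliqueSet d p r D ∧ C₀ ⊆ D}
    (fun S hS hchain ⟨D, hD⟩ => ⟨⋃₀ S,
      ⟨IsCliqueSet.sUnion_of_isChain (fun D hD => (hS hD).1) hchain,
        (hS hD).2.trans (subset_sUnion_of_mem hD)⟩, fun _ => subset_sUnion_of_mem⟩)
    C₀ ⟨h, subset_rfl⟩
  exact ⟨C, hC₀C, hC.1, fun D hD hCD => (hmax ⟨hD, hC₀C.trans hCD⟩ hCD).antisymm hCD⟩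

variable {X : Type*} [PseudoMetricSpace X] {r : ℕ → ℝ}

theorem SeqEquiv.refl (x : ℕ → X) : SeqEquiv dist r x x := by
  simp only [SeqEquiv, dist_self, zero_div, tendsto_const_nhds]

theorem SeqEquiv.tendsto_dist_div {x x' y y' : ℕ → X} (hx : SeqEquiv dist r x x')
    (hy : SeqEquiv dist r y y') {L : ℝ}
    (h : Tendsto (fun n => dist (x n) (y n) / r n) atTop (𝓝 L)) :
    Tendsto (fun n => dist (x' n) (y' n) / r n) atTop (𝓝 L) := by
  have hbound : ∀ n, ‖dist (x' n) (y' n) / r n - dist (x n) (y n) / r n‖ ≤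
      |dist (x n) (x' n) / r n| + |dist (y n) (y' n) / r n| := fun n => by
    have h4 := dist_dist_dist_le (x' n) (y' n) (x n) (y n)
    rw [Real.dist_eq, dist_comm (x' n) (x n), dist_comm (y' n) (y n)] at h4
    rw [Real.norm_eq_abs, ← sub_div, abs_div, abs_div, abs_div, ← add_div,
      abs_of_nonneg dist_nonneg, abs_of_nonneg dist_nonneg]
    exact div_le_div_of_nonneg_right h4 (abs_nonneg _)
  have hdiff := squeeze_zero_norm hbound (by simpa using hx.abs.add hy.abs)
  simpa using hdiff.add h

theorem SeqEquiv.trans {x y z : ℕ → X} (hxy : SeqEquiv dist r x y) (hyz : SeqEquiv dist r y z) :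
    SeqEquiv dist r x z :=
  (SeqEquiv.refl x).tendsto_dist_div hyz hxy

theorem isCliqueSet_setOf_seqEquiv {ι : Type*} {p : X} {y : ι → ℕ → X}
    (hy : ∀ i j, MutStable dist r (y i) (y j)) :
    IsCliqueSet dist p r {z | SeqAdm dist p r z ∧ ∃ i, SeqEquiv dist r (y i) z} := by
  refine ⟨fun z hz => hz.1, fun z ⟨_, i, hiz⟩ w hw hzw => ⟨hw, i, hiz.trans hzw⟩, ?_⟩
  rintro z ⟨-, i, hiz⟩ w ⟨-, j, hjw⟩
  obtain ⟨L, hL⟩ := hy i j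
  exact ⟨L, hiz.tendsto_dist_div hjw hL⟩

theorem not_bddAbove_kuratowskiLiminf_of_isCliqueSet {p : X} (hr : ∀ n, 0 < r n)
    {C : Set (ℕ → X)} (hC : IsCliqueSet dist p r C)
    (hunb : ∀ M : ℝ, ∃ x ∈ C, ∃ y ∈ C, M < seqDist dist r x y) :
    ¬ BddAbove (kuratowskiLiminf (rescale (range fun x => dist x p) r)) := by
  have hE : (range fun x => dist x p).Nonempty := ⟨_, p, rfl⟩
  have hlim : ∀ x ∈ C, ∃ L ∈ kuratowskiLiminf (rescale (range fun x => dist x p) r),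
      Tendsto (fun n => dist (x n) p / r n) atTop (𝓝 L) := fun x hx => by
    obtain ⟨L, hL⟩ := (hC.1 x hx).2
    exact ⟨L, (mem_kuratowskiLiminf_rescale_iff hE).2
      ⟨_, fun n => mem_range_self (x n), hL⟩, hL⟩
  refine not_bddAbove_iff.2 fun M => ?_
  obtain ⟨x, hx, y, hy, hM⟩ := hunb (2 * M)
  obtain ⟨Lx, hLx, hxL⟩ := hlim x hx
  obtain ⟨Ly, hLy, hyL⟩ := hlim y hy
  obtain ⟨L, hL⟩ := hC.2.2 x hx y hy
  have hle : L ≤ Lx + Ly := le_of_tendsto_of_tendsto' hL (hxL.add hyL) fun n => by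
    rw [← add_div]
    exact div_le_div_of_nonneg_right (dist_triangle_right _ _ p) (hr n).le
  have hLM : 2 * M < L := hL.limUnder_eq ▸ hM
  rcases le_total Lx Ly with h | h
  · exact ⟨Ly, hLy, by linarith⟩
  · exact ⟨Lx, hLx, by linarith⟩

theorem exists_subseq_tendsto_dist_div {p : X} (hr : ∀ n, 0 < r n) {x : ℕ → ℕ → X} {t : ℕ → ℝ}
    (hx : ∀ k, Tendsto (fun n => dist (x k n) p / r n) atTop (𝓝 (t k))) :
    ∃ ψ : ℕ → ℕ, StrictMono ψ ∧ ∃ L : ℕ × ℕ → ℝ, ∀ kl : ℕ × ℕ,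
      Tendsto (fun n => dist (x kl.1 (ψ n)) (x kl.2 (ψ n)) / r (ψ n)) atTop (𝓝 (L kl)) := by
  refine exists_subseq_forall_tendsto_s13 (u := fun (kl : ℕ × ℕ) n => dist (x kl.1 n) (x kl.2 n) / r n)
    fun ⟨k, l⟩ => ?_
  obtain ⟨B, hB⟩ := (isBounded_range_of_tendsto _ ((hx k).add (hx l))).bddAbove
  refine (isBounded_Icc 0 B).subset (range_subset_iff.2 fun n => ⟨by positivity [hr n], ?_⟩)
  refine le_trans ?_ (hB (mem_range_self n))
  rw [← add_div]
  exact div_le_div_of_nonneg_right (dist_triangle_right _ _ p) (hr n).le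

theorem exists_unbounded_isPretangent_of_not_bddAbove {p : X} (hr : ScalingSeq r)
    (hL : ¬ BddAbove (kuratowskiLiminf (rescale (range fun x => dist x p) r))) :
    ∃ r' : ℕ → ℝ, ScalingSeq r' ∧ ∃ C : Set (ℕ → X), IsPretangent dist p r' C ∧
      ∀ M : ℝ, ∃ x ∈ C, ∃ y ∈ C, M < seqDist dist r' x y := by
  have hE : (range fun x => dist x p).Nonempty := ⟨_, p, rfl⟩
  choose t htL htk using fun k : ℕ => not_bddAbove_iff.1 hL k
  have ht0 : ∀ k, 0 < t k := fun k => k.cast_nonneg.trans_lt (htk k)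
  have hx : ∀ k, ∃ x : ℕ → X, Tendsto (fun n => dist (x n) p / r n) atTop (𝓝 (t k)) := fun k => by
    obtain ⟨e, he, het⟩ := (mem_kuratowskiLiminf_rescale_iff hE).1 (htL k)
    choose x hx using he
    exact ⟨x, by simpa only [hx] using het⟩
  choose x hx using hx
  obtain ⟨ψ, hψ, L, hL⟩ := exists_subseq_tendsto_dist_div hr.1 hx
  have hr' : ScalingSeq (r ∘ ψ) := ⟨fun n => hr.1 _, hr.2.comp hψ.tendsto_atTop⟩
  have hxψ : ∀ k, Tendsto (fun n => dist (x k (ψ n)) p / r (ψ n)) atTop (𝓝 (t k)) :=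
    fun k => (hx k).comp hψ.tendsto_atTop
  have hadm : ∀ k, SeqAdm dist p (r ∘ ψ) (x k ∘ ψ) :=
    fun k => ⟨tendsto_atTop_of_tendsto_div hr'.2 (hxψ k) (ht0 k), t k, hxψ k⟩
  obtain ⟨C, hC₀C, hC⟩ := (isCliqueSet_setOf_seqEquiv (p := p) (y := fun k => x k ∘ ψ)
    fun k l => ⟨L (k, l), hL (k, l)⟩).exists_isPretangent_superset
  refine ⟨r ∘ ψ, hr', C, hC, fun M => ?_⟩
  obtain ⟨k, hk⟩ := exists_nat_gt (M + t 0)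
  refine ⟨x 0 ∘ ψ, hC₀C ⟨hadm 0, 0, SeqEquiv.refl _⟩, x k ∘ ψ, hC₀C ⟨hadm k, k, SeqEquiv.refl _⟩,
    ?_⟩
  have hge : t k - t 0 ≤ L (0, k) := le_of_tendsto_of_tendsto' ((hxψ k).sub (hxψ 0)) (hL (0, k))
    fun n => by
      rw [← sub_div]
      exact div_le_div_of_nonneg_right (by linarith [dist_triangle_left (x k (ψ n)) p (x 0 (ψ n))])
        (hr.1 _).le
  rw [show seqDist dist (r ∘ ψ) (x 0 ∘ ψ) (x k ∘ ψ) = L (0, k) from (hL (0, k)).limUnder_eq]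
  linarith [htk k]

end Pretangent

theorem exists_unbounded_pretangent_iff_general {X : Type*} [MetricSpace X]
    (p : X) :
    -- (i) ↔ (ii)
    ((∃ r : ℕ → ℝ, ScalingSeq r ∧ ∃ C : Set (ℕ → X), IsPretangent dist p r C ∧
        ∀ M : ℝ, ∃ x ∈ C, ∃ y ∈ C, M < seqDist dist r x y) ↔
      (∃ r : ℕ → ℝ, ScalingSeq r ∧
        ¬ BddAbove (kuratowskiLiminf
          (fun n => (fun s => (1 / r n) * s) '' (Set.range fun x : X => dist x p))))) ∧
    -- (ii) ↔ (iii)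
    ((∃ r : ℕ → ℝ, ScalingSeq r ∧
        ¬ BddAbove (kuratowskiLiminf
          (fun n => (fun s => (1 / r n) * s) '' (Set.range fun x : X => dist x p)))) ↔
      ¬ OmegaStronglyPorousAtInfty (Set.range fun x : X => dist x p)) :=
  ⟨⟨fun ⟨r, hr, _, hC, hunb⟩ =>
      ⟨r, hr, not_bddAbove_kuratowskiLiminf_of_isCliqueSet hr.1 hC.1 hunb⟩,
      fun ⟨_, hr, hL⟩ => exists_unbounded_isPretangent_of_not_bddAbove hr hL⟩,
    fun ⟨_, hr, hL⟩ => not_omegaStronglyPorousAtInfty_of_not_bddAbove ⟨_, p, rfl⟩ hr hL,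
    exists_not_bddAbove_of_not_omegaStronglyPorousAtInfty⟩

/-- **Theorem on existence of unbounded pretangent spaces.** Let `(X,d)`
be an unbounded metric space and `p ∈ X`.  The following are equivalent:
(i)   there exists an unbounded pretangent space `Ω^X_{∞,r̃}`;
(ii)  there exists a scaling sequence `r̃ = (rₙ)` such that the Kuratowski lower limit
      `Liminf_{n→∞} (1/rₙ)·S_p(X)` is an unbounded subset of `ℝ⁺`;
(iii) the set `S_p(X)` is not `ω`-strongly porous at infinity. -/
theorem exists_unbounded_pretangent_iff {X : Type*} [MetricSpace X]
    (hX : ¬ Bornology.IsBounded (Set.univ : Set X)) (p : X) :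
    -- (i) ↔ (ii)
    ((∃ r : ℕ → ℝ, ScalingSeq r ∧ ∃ C : Set (ℕ → X), IsPretangent dist p r C ∧
        ∀ M : ℝ, ∃ x ∈ C, ∃ y ∈ C, M < seqDist dist r x y) ↔
      (∃ r : ℕ → ℝ, ScalingSeq r ∧
        ¬ BddAbove (kuratowskiLiminf
          (fun n => (fun s => (1 / r n) * s) '' (Set.range fun x : X => dist x p))))) ∧
    -- (ii) ↔ (iii)
    ((∃ r : ℕ → ℝ, ScalingSeq r ∧
        ¬ BddAbove (kuratowskiLiminf
          (fun n => (fun s => (1 / r n) * s) '' (Set.range fun x : X => dist x p)))) ↔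
      ¬ OmegaStronglyPorousAtInfty (Set.range fun x : X => dist x p)) :=
  exists_unbounded_pretangent_iff_general p
end
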